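/- Soundness of pattern-based library learning: if a term t compresses into a compressed term t̂ via a sequence of κ-rewrite steps (each replacing a subterm matching a pattern p by the application (λ vars(p) → p) applied to the matched arguments), then t̂ beta-evaluates back to t. -/

import Mathlib

/-! STATEMENT 9: Soundness of pattern-based library learning: if a term t
compresses into a compressed term t̂ via a sequence of κ-rewrite steps, then
t̂ beta-evaluates back to t. -/

/-- Compressed terms: variables, constructor applications, and fully-applied
lambda abstractions `(λ x₁ … xₙ → body) a₁ … aₙ`. -/
inductive Tm (S V : Type) : Type where
  | var : V → Tm S V
  | con : S → List (Tm S V) → Tm S V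
  | app : List V → Tm S V → List (Tm S V) → Tm S V

/-- (First-order) patterns: terms over constructors that may contain
variables, but no lambda abstractions or applications. -/
inductive Pat (S V : Type) : Type where
  | var : V → Pat S V
  | con : S → List (Pat S V) → Pat S V

namespace Tm

variable {S V : Type} [DecidableEq V]

/-- Parallel substitution of terms for free variables; binders shadow. -/
def subst (σ : V → Option (Tm S V)) : Tm S V → Tm S V
  | .var x => (σ x).getD (.var x)
  | .con s args => .con s (args.attach.map (fun a => subst σ a.1))
  | .app xs b args =>
      .app xs (subst (fun v => if v ∈ xs then none else σ v) b)
        (args.attach.map (fun a => subst σ a.1))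
  decreasing_by
  all_goals simp_wf
  all_goals (try have h := List.sizeOf_lt_of_mem a.2)
  all_goals omega

def mkEnv (xs : List V) (args : List (Tm S V)) : V → Option (Tm S V) :=
  fun v => (xs.zip args).lookup v

/-- One step of beta-reduction, applied in any context. -/
inductive Step : Tm S V → Tm S V → Prop where
  | beta (xs : List V) (b : Tm S V) (args : List (Tm S V)) :
      xs.length = args.length →
      Step (.app xs b args) (subst (mkEnv xs args) b)
  | conArg (s : S) (l r : List (Tm S V)) (a a' : Tm S V) :
      Step a a' → Step (.con s (l ++ a :: r)) (.con s (l ++ a' :: r))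
  | appBody (xs : List V) (b b' : Tm S V) (args : List (Tm S V)) :
      Step b b' → Step (.app xs b args) (.app xs b' args)
  | appArg (xs : List V) (b : Tm S V) (l r : List (Tm S V)) (a a' : Tm S V) :
      Step a a' → Step (.app xs b (l ++ a :: r)) (.app xs b (l ++ a' :: r))

/-- Ground terms of the base language: no variables and no applications. -/
inductive IsGround : Tm S V → Prop where
  | con (s : S) (args : List (Tm S V)) :
      (∀ a ∈ args, IsGround a) → IsGround (.con s args)

end Tm

namespace Pat

variable {S V : Type} [DecidableEq V]

/-- The list of variable occurrences of a pattern. -/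
def varsList : Pat S V → List V
  | .var x => [x]
  | .con _ args => args.attach.flatMap (fun a => varsList a.1)
  decreasing_by
  all_goals simp_wf
  all_goals (try have h := List.sizeOf_lt_of_mem a.2)
  all_goals omega

/-- The distinct variables of a pattern (in order of first occurrence). -/
def pvars (p : Pat S V) : List V := p.varsList.dedup

/-- A pattern viewed as a (compressed) term. -/
def toTm : Pat S V → Tm S V
  | .var x => .var x
  | .con s args => .con s (args.attach.map (fun a => toTm a.1))
  decreasing_by
  all_goals simp_wf
  all_goals (try have h := List.sizeOf_lt_of_mem a.2)
  all_goals omega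

/-- Applying a substitution of terms for pattern variables, yielding a term. -/
def substTm (σ : V → Tm S V) : Pat S V → Tm S V
  | .var x => σ x
  | .con s args => .con s (args.attach.map (fun a => substTm σ a.1))
  decreasing_by
  all_goals simp_wf
  all_goals (try have h := List.sizeOf_lt_of_mem a.2)
  all_goals omega

end Pat

namespace Tm

variable {S V : Type} [DecidableEq V]

/-- One κ-rewrite step using patterns from `P`: somewhere in the term, a
subterm `σ(p)` matching a pattern `p ∈ P` is replaced by the beta-redex
`(λ vars(p) → p) σ(vars(p))`. -/
inductive KStep (P : Set (Pat S V)) : Tm S V → Tm S V → Prop where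
  | root (p : Pat S V) (σ : V → Tm S V) :
      p ∈ P →
      KStep P (p.substTm σ) (.app p.pvars p.toTm (p.pvars.map σ))
  | conArg (s : S) (l r : List (Tm S V)) (a a' : Tm S V) :
      KStep P a a' → KStep P (.con s (l ++ a :: r)) (.con s (l ++ a' :: r))
  | appBody (xs : List V) (b b' : Tm S V) (args : List (Tm S V)) :
      KStep P b b' → KStep P (.app xs b args) (.app xs b' args)
  | appArg (xs : List V) (b : Tm S V) (l r : List (Tm S V)) (a a' : Tm S V) :
      KStep P a a' → KStep P (.app xs b (l ++ a :: r)) (.app xs b (l ++ a' :: r))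

end Tm

/-! Each κ-step is undone by a single beta step: contracting the redex
`(λ vars(p) → p) σ(vars(p))` instantiates every variable of `p` by its image
under `σ`, which gives back the matched subterm `σ(p)`. Reversing the
compression sequence step by step yields the beta-evaluation. -/

lemma List.lookup_zip_map_self {α β : Type*} [BEq α] [LawfulBEq α] (f : α → β) {a : α}
    {as : List α} (h : a ∈ as) : (as.zip (as.map f)).lookup a = some (f a) := by
  have hzip : as.zip (as.map f) = as.map fun x => (x, f x) := by
    simpa only [List.map_id, id] using List.zip_map' (f := id) (g := f) (l := as)
  exact hzip ▸ List.lookup_graph f h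

namespace Pat

variable {S V : Type}

lemma mem_varsList_con {s : S} {args : List (Pat S V)} {p : Pat S V} (hp : p ∈ args)
    {v : V} (hv : v ∈ p.varsList) : v ∈ (con s args).varsList := by
  simp only [varsList, List.flatMap_subtype, List.unattach_attach]
  exact List.mem_flatMap.mpr ⟨p, hp, hv⟩

theorem subst_toTm [DecidableEq V] {σ : V → Tm S V} {τ : V → Option (Tm S V)} (p : Pat S V)
    (hτ : ∀ v ∈ p.varsList, τ v = some (σ v)) : p.toTm.subst τ = p.substTm σ := by
  induction p using toTm.induct with
  | case1 x =>
    rw [toTm, substTm, Tm.subst, hτ x (by simp [varsList])]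
    rfl
  | case2 s args ih =>
    rw [toTm, substTm, Tm.subst]
    simp only [Tm.con.injEq, true_and, List.map_subtype, List.unattach_attach, List.map_map]
    exact List.map_congr_left fun a ha =>
      ih ⟨a, ha⟩ fun v hv => hτ v (mem_varsList_con ha hv)

theorem subst_mkEnv_pvars_toTm [DecidableEq V] (σ : V → Tm S V) (p : Pat S V) :
    p.toTm.subst (Tm.mkEnv p.pvars (p.pvars.map σ)) = p.substTm σ :=
  p.subst_toTm fun _ hv => List.lookup_zip_map_self σ (List.mem_dedup.mpr hv)

end Pat

namespace Tm

variable {S V : Type} [DecidableEq V]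

theorem Step.of_kStep {P : Set (Pat S V)} {t t' : Tm S V} (h : KStep P t t') :
    Step t' t := by
  induction h with
  | root p σ _ =>
    simpa only [p.subst_mkEnv_pvars_toTm σ] using
      Step.beta p.pvars p.toTm (p.pvars.map σ) (List.length_map σ).symm
  | conArg s l r _ _ _ ih => exact .conArg s l r _ _ ih
  | appBody xs _ _ args _ ih => exact .appBody xs _ _ args ih
  | appArg xs b l r _ _ _ ih => exact .appArg xs b l r _ _ ih

end Tm

theorem kstep_sound_general {S V : Type} [DecidableEq V]
    (P : Set (Pat S V)) (t tc : Tm S V)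
    (hcomp : Relation.ReflTransGen (Tm.KStep P) t tc) :
    Relation.ReflTransGen Tm.Step tc t :=
  Relation.reflTransGen_swap.mp
    (Relation.ReflTransGen.mono (fun _ _ h => Tm.Step.of_kStep h) _ _ hcomp)

/-- Soundness of pattern-based library learning: if a term `t` (of the base
language) compresses into `tc` by κ-rewrite steps with patterns from `P`,
then `tc` beta-evaluates back to `t`. -/
theorem kstep_sound {S V : Type} [DecidableEq V]
    (P : Set (Pat S V)) (t tc : Tm S V) (hg : Tm.IsGround t)
    (hcomp : Relation.ReflTransGen (Tm.KStep P) t tc) :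
    Relation.ReflTransGen Tm.Step tc t :=
  kstep_sound_general P t tc hcomp
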